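/- arXiv:2004.07411 — 3 statements merged into one kernel-verified Lean document; each statement's English description precedes it below -/
import Mathlib

section
/- For T, λ > 0, if T < π/(2λ), then every complex root s of the transcendental equation s·e^{Ts} + λ = 0 satisfies Re(s) < 0. -/
/-! If `Re s ≥ 0` then `|s| ≤ |s e^{Ts}| = λ`, so `|T Im s| ≤ Tλ < π/2` and `e^{Ts}` lies in the
open right half-plane. But a number whose product with a point of the right half-plane is the
negative real `-λ` must itself have negative real part. -/

open Complex

lemma Complex.re_neg_of_mul_eq_neg_ofReal {s w : ℂ} {c : ℝ} (hc : 0 < c) (hw : 0 < w.re)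
    (h : s * w = -c) : s.re < 0 := by
  have hw0 : w ≠ 0 := fun h0 => by simp [h0] at hw
  have hs : s = -c / w := eq_div_of_mul_eq hw0 h
  have hre : s.re = -c * w.re / normSq w := by simp [hs, div_re]
  rw [hre]
  exact div_neg_of_neg_of_pos (by nlinarith) (normSq_pos.mpr hw0)

lemma Complex.exp_re_pos_of_abs_im_lt {z : ℂ} (hz : |z.im| < Real.pi / 2) : 0 < (exp z).re := by
  rw [exp_re]
  exact mul_pos (Real.exp_pos _) (Real.cos_pos_of_mem_Ioo (abs_lt.mp hz))

lemma Complex.norm_le_norm_mul_exp (s : ℂ) {z : ℂ} (hz : 0 ≤ z.re) : ‖s‖ ≤ ‖s * exp z‖ := by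
  rw [norm_mul, norm_exp]
  exact le_mul_of_one_le_right (norm_nonneg s) (Real.one_le_exp hz)

theorem delay_small_roots_stable (T lam : ℝ) (hT : 0 < T) (hlam : 0 < lam)
    (h : T < Real.pi / (2 * lam)) :
    ∀ s : ℂ, s * Complex.exp (T * s) + lam = 0 → s.re < 0 := by
  intro s hs
  by_contra! hσ
  have hroot : s * exp (T * s) = -lam := by linear_combination hs
  have hnorm : ‖s‖ ≤ lam := by
    simpa [hroot, abs_of_pos hlam] using
      norm_le_norm_mul_exp s (z := T * s) (by simpa using mul_nonneg hT.le hσ)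
  have hTlam : T * lam < Real.pi / 2 := by
    rw [lt_div_iff₀ (by positivity)] at h
    linarith
  have him : |(T * s).im| < Real.pi / 2 :=
    calc |(T * s).im| = T * |s.im| := by simp [abs_mul, abs_of_pos hT]
      _ ≤ T * lam := mul_le_mul_of_nonneg_left ((abs_im_le_norm s).trans hnorm) hT.le
      _ < Real.pi / 2 := hTlam
  exact hσ.not_gt (re_neg_of_mul_eq_neg_ofReal hlam (exp_re_pos_of_abs_im_lt him) hroot)
end

section
/- For T, λ > 0, if T > π/(2λ), then the transcendental equation s·e^{Ts} + λ = 0 has at least one complex root s with Re(s) > 0. -/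
/-!
Scaling `z = T s` turns the equation into `z e^z = -μ` with `μ = λ T > π / 2`.
For `y ∈ (π/2, π)` put `z(y) = -y cot y + i y`; then `z(y) = -y e^{-iy} / sin y`, so
`z(y) e^{z(y)} = -(y / sin y) e^{-y cot y}` is a negative real number, and `Re z(y) > 0`.
The modulus `y / sin y · e^{-y cot y}` equals `π / 2` at `y = π / 2` and tends to `+∞` as
`y → π⁻`, so by the intermediate value theorem it takes the value `μ`.
-/

open Real Filter Topology Set

noncomputable def rootCurve (y : ℝ) : ℂ := ⟨-(y * cos y / sin y), y⟩

noncomputable def rootCurveGain (y : ℝ) : ℝ := y / sin y * rexp (-(y * cos y / sin y))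

lemma rootCurve_mul_exp {y : ℝ} (hy : sin y ≠ 0) :
    rootCurve y * Complex.exp (rootCurve y) = -rootCurveGain y := by
  apply Complex.ext <;>
    simp only [rootCurve, rootCurveGain, Complex.mul_re, Complex.mul_im, Complex.exp_re,
      Complex.exp_im, Complex.neg_re, Complex.neg_im, Complex.ofReal_re, Complex.ofReal_im]
  · field_simp
    linear_combination (-y) * sin_sq_add_cos_sq y
  · field_simp
    ring

lemma rootCurve_re_pos {y : ℝ} (hy : y ∈ Ioo (π / 2) π) : 0 < (rootCurve y).re := by
  have hy0 : 0 < y := by linarith [pi_pos, hy.1]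
  have hsin : 0 < sin y := sin_pos_of_pos_of_lt_pi hy0 hy.2
  have hcos : cos y < 0 := cos_neg_of_pi_div_two_lt_of_lt hy.1 (by linarith [pi_pos, hy.2])
  exact neg_pos.2 (div_neg_of_neg_of_pos (mul_neg_of_pos_of_neg hy0 hcos) hsin)

lemma sin_pos_of_mem_Ico_pi_div_two_pi {y : ℝ} (hy : y ∈ Ico (π / 2) π) : 0 < sin y :=
  sin_pos_of_pos_of_lt_pi (by linarith [pi_pos, hy.1]) hy.2

lemma tendsto_sin_nhdsLT_pi : Tendsto sin (𝓝[<] π) (𝓝[>] 0) := by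
  refine tendsto_nhdsWithin_iff.2 ⟨?_, ?_⟩
  · simpa using (continuous_sin.tendsto π).mono_left nhdsWithin_le_nhds
  · filter_upwards [Ioo_mem_nhdsLT pi_pos] with y hy using sin_pos_of_pos_of_lt_pi hy.1 hy.2

lemma continuousOn_rootCurveGain : ContinuousOn rootCurveGain (Ico (π / 2) π) := by
  have hsin : ∀ y ∈ Ico (π / 2) π, sin y ≠ 0 := fun y hy =>
    (sin_pos_of_mem_Ico_pi_div_two_pi hy).ne'
  unfold rootCurveGain
  fun_prop (disch := assumption)

lemma div_sin_le_rootCurveGain {y : ℝ} (hy : y ∈ Ico (π / 2) π) :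
    y / sin y ≤ rootCurveGain y := by
  have hy0 : 0 < y := by linarith [pi_pos, hy.1]
  have hsin := sin_pos_of_mem_Ico_pi_div_two_pi hy
  have hcos : cos y ≤ 0 := cos_nonpos_of_pi_div_two_le_of_le hy.1 (by linarith [pi_pos, hy.2])
  refine le_mul_of_one_le_right (div_pos hy0 hsin).le (one_le_exp ?_)
  exact neg_nonneg.2
    (div_nonpos_of_nonpos_of_nonneg (mul_nonpos_of_nonneg_of_nonpos hy0.le hcos) hsin.le)

lemma tendsto_rootCurveGain_nhdsLT_pi : Tendsto rootCurveGain (𝓝[<] π) atTop := by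
  have hdiv : Tendsto (fun y => y * (sin y)⁻¹) (𝓝[<] π) atTop :=
    Tendsto.pos_mul_atTop pi_pos (tendsto_id.mono_left nhdsWithin_le_nhds)
      (tendsto_inv_nhdsGT_zero.comp tendsto_sin_nhdsLT_pi)
  refine tendsto_atTop_mono' _ ?_ hdiv
  filter_upwards [Ico_mem_nhdsLT (by linarith [pi_pos] : π / 2 < π)] with y hy
  exact div_sin_le_rootCurveGain hy

lemma rootCurveGain_pi_div_two : rootCurveGain (π / 2) = π / 2 := by
  simp [rootCurveGain]

lemma exists_rootCurveGain_eq {μ : ℝ} (hμ : π / 2 < μ) :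
    ∃ y ∈ Ioo (π / 2) π, rootCurveGain y = μ := by
  have hlt : π / 2 < π := by linarith [pi_pos]
  obtain ⟨y, hy, hyμ⟩ := isPreconnected_Ico.intermediate_value_Ici (left_mem_Ico.2 hlt)
    (le_principal_iff.2 (Ico_mem_nhdsLT hlt)) continuousOn_rootCurveGain
    tendsto_rootCurveGain_nhdsLT_pi (by rw [rootCurveGain_pi_div_two]; exact hμ.le)
  refine ⟨y, ⟨lt_of_le_of_ne hy.1 ?_, hy.2⟩, hyμ⟩
  rintro rfl
  exact hμ.ne (rootCurveGain_pi_div_two ▸ hyμ)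

lemma exists_mul_exp_eq_neg_of_pi_div_two_lt {μ : ℝ} (hμ : π / 2 < μ) :
    ∃ z : ℂ, z * Complex.exp z = -μ ∧ 0 < z.re := by
  obtain ⟨y, hy, hyμ⟩ := exists_rootCurveGain_eq hμ
  have hsin : sin y ≠ 0 := (sin_pos_of_mem_Ico_pi_div_two_pi (Ioo_subset_Ico_self hy)).ne'
  exact ⟨rootCurve y, by rw [rootCurve_mul_exp hsin, hyμ], rootCurve_re_pos hy⟩

theorem delay_large_unstable_root (T lam : ℝ) (hT : 0 < T) (hlam : 0 < lam)
    (h : Real.pi / (2 * lam) < T) :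
    ∃ s : ℂ, s * Complex.exp (T * s) + lam = 0 ∧ 0 < s.re := by
  have hμ : π / 2 < lam * T := by
    rw [div_lt_iff₀ (by positivity)] at h
    linarith
  obtain ⟨z, hz, hre⟩ := exists_mul_exp_eq_neg_of_pi_div_two_lt hμ
  have hT' : (T : ℂ) ≠ 0 := Complex.ofReal_ne_zero.2 hT.ne'
  refine ⟨z / T, ?_, by simpa using div_pos hre hT⟩
  rw [mul_div_cancel₀ z hT', div_mul_eq_mul_div, hz]
  push_cast
  field_simp
  ring
end

section
/- Let L be an n×n real matrix with L·𝟏 = 0 and kᵀL = 0 for some vector k with all entries positive and kᵀ𝟏 ≠ 0. Then the nonzero spectrum of L + 𝟏kᵀ equals the nonzero spectrum of L together with the additional eigenvalue kᵀ𝟏, i.e. λ(L + 𝟏kᵀ) = {kᵀ𝟏} ∪ (λ(L) \ {0}), assuming 0 is a simple eigenvalue of L. -/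
/-!
If `v` is an eigenvector of `A + u cᵀ` for `μ`, pairing the eigen-equation with `c` (which
annihilates the range of `A`) gives `(c ⬝ᵥ v) (c ⬝ᵥ u - μ) = 0`. So either `μ = c ⬝ᵥ u`, attained
at `v = u`, or `c ⬝ᵥ v = 0` and `v` is an eigenvector of `A`; then `μ ≠ 0`, because `ker A` is
spanned by `u` (simplicity of the eigenvalue `0`) and `c ⬝ᵥ u ≠ 0`. Conversely, an eigenvector of
`A` for `μ ≠ 0` is orthogonal to `c` and hence stays an eigenvector of `A + u cᵀ`.
-/

open Matrix Module

namespace Matrix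

variable {ι : Type*} [Fintype ι]

theorem add_vecMulVec_mulVec {R : Type*} [CommRing R] (A : Matrix ι ι R) (u c v : ι → R) :
    (A + vecMulVec u c) *ᵥ v = A *ᵥ v + (c ⬝ᵥ v) • u := by
  rw [add_mulVec, vecMulVec_mulVec, op_smul_eq_smul]

variable {K : Type*} [DecidableEq ι] [Field K]

theorem mem_spectrum_iff_exists_mulVec_eq_smul {A : Matrix ι ι K} {μ : K} :
    μ ∈ spectrum K A ↔ ∃ v ≠ 0, A *ᵥ v = μ • v := by
  rw [← spectrum_toLin', ← End.hasEigenvalue_iff_mem_spectrum]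
  constructor
  · intro h
    obtain ⟨v, hv⟩ := h.exists_hasEigenvector
    exact ⟨v, hv.2, by simpa using hv.apply_eq_smul⟩
  · rintro ⟨v, hv0, hv⟩
    exact End.hasEigenvalue_of_hasEigenvector ⟨End.mem_eigenspace_iff.2 (by simpa using hv), hv0⟩

theorem finrank_ker_toLin'_le_rootMultiplicity_zero (A : Matrix ι ι K) :
    finrank K (LinearMap.ker A.toLin') ≤ A.charpoly.rootMultiplicity 0 := by
  rw [Polynomial.rootMultiplicity_eq_natTrailingDegree', ← charpoly_toLin',
    ← LinearMap.finrank_maxGenEigenspace_zero_eq, ← End.eigenspace_zero]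
  exact Submodule.finrank_mono End.eigenspace_le_maxGenEigenspace

theorem ker_toLin'_eq_span_singleton {A : Matrix ι ι K}
    (hA : A.charpoly.rootMultiplicity 0 ≤ 1) {u : ι → K} (hu : A *ᵥ u = 0) (hu0 : u ≠ 0) :
    LinearMap.ker A.toLin' = K ∙ u := by
  refine (Submodule.eq_of_le_of_finrank_le ?_ ?_).symm
  · rwa [Submodule.span_singleton_le_iff_mem, LinearMap.mem_ker, toLin'_apply]
  · rw [finrank_span_singleton hu0]
    exact (finrank_ker_toLin'_le_rootMultiplicity_zero A).trans hA

section RankOneShift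

variable {A : Matrix ι ι K} {u c : ι → K}

theorem dotProduct_mem_spectrum_add_vecMulVec (hu : A *ᵥ u = 0) (hu0 : u ≠ 0) :
    c ⬝ᵥ u ∈ spectrum K (A + vecMulVec u c) :=
  mem_spectrum_iff_exists_mulVec_eq_smul.2
    ⟨u, hu0, by rw [add_vecMulVec_mulVec, hu, zero_add]⟩

theorem mem_spectrum_add_vecMulVec_of_mem_spectrum (hc : c ᵥ* A = 0) {μ : K} (hμ : μ ≠ 0)
    (h : μ ∈ spectrum K A) : μ ∈ spectrum K (A + vecMulVec u c) := by
  obtain ⟨v, hv0, hv⟩ := mem_spectrum_iff_exists_mulVec_eq_smul.1 h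
  have hcv : c ⬝ᵥ v = 0 := by
    have : μ * (c ⬝ᵥ v) = 0 := by
      rw [← smul_eq_mul, ← dotProduct_smul, ← hv, dotProduct_mulVec, hc, zero_dotProduct]
    exact (mul_eq_zero.1 this).resolve_left hμ
  exact mem_spectrum_iff_exists_mulVec_eq_smul.2
    ⟨v, hv0, by rw [add_vecMulVec_mulVec, hcv, zero_smul, add_zero, hv]⟩

theorem mem_spectrum_of_mem_spectrum_add_vecMulVec (hker : LinearMap.ker A.toLin' ≤ K ∙ u)
    (hc : c ᵥ* A = 0) (hcu : c ⬝ᵥ u ≠ 0) {μ : K} (h : μ ∈ spectrum K (A + vecMulVec u c))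
    (hμ : μ ≠ c ⬝ᵥ u) : μ ∈ spectrum K A \ {0} := by
  obtain ⟨v, hv0, hv⟩ := mem_spectrum_iff_exists_mulVec_eq_smul.1 h
  rw [add_vecMulVec_mulVec] at hv
  have hcv : c ⬝ᵥ v = 0 := by
    have := congrArg (c ⬝ᵥ ·) hv
    simp only [dotProduct_add, dotProduct_smul, dotProduct_mulVec, hc, zero_dotProduct,
      smul_eq_mul, zero_add] at this
    have : (c ⬝ᵥ v) * (c ⬝ᵥ u - μ) = 0 := by linear_combination this
    exact (mul_eq_zero.1 this).resolve_right (sub_ne_zero.2 hμ.symm)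
  rw [hcv, zero_smul, add_zero] at hv
  refine ⟨mem_spectrum_iff_exists_mulVec_eq_smul.2 ⟨v, hv0, hv⟩, fun hμ0 => hv0 ?_⟩
  have hvker : v ∈ LinearMap.ker A.toLin' := by
    rw [LinearMap.mem_ker, toLin'_apply, hv, hμ0, zero_smul]
  obtain ⟨a, rfl⟩ := Submodule.mem_span_singleton.1 (hker hvker)
  rw [dotProduct_smul, smul_eq_mul] at hcv
  rw [(mul_eq_zero.1 hcv).resolve_right hcu, zero_smul]

theorem spectrum_add_vecMulVec (hker : LinearMap.ker A.toLin' = K ∙ u) (hc : c ᵥ* A = 0)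
    (hcu : c ⬝ᵥ u ≠ 0) :
    spectrum K (A + vecMulVec u c) = {c ⬝ᵥ u} ∪ (spectrum K A \ {0}) := by
  have hu : A *ᵥ u = 0 := by
    simpa [toLin'_apply] using hker.ge (Submodule.mem_span_singleton_self u)
  have hu0 : u ≠ 0 := by
    rintro rfl
    exact hcu (dotProduct_zero c)
  ext μ
  constructor
  · intro h
    by_cases hμ : μ = c ⬝ᵥ u
    · exact .inl hμ
    · exact .inr (mem_spectrum_of_mem_spectrum_add_vecMulVec hker.le hc hcu h hμ)
  · rintro (rfl | ⟨h, hμ⟩)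
    · exact dotProduct_mem_spectrum_add_vecMulVec hu hu0
    · exact mem_spectrum_add_vecMulVec_of_mem_spectrum hc hμ h

end RankOneShift

end Matrix

theorem rank_one_shift_spectrum_general {n : ℕ} (L : Matrix (Fin n) (Fin n) ℝ)
    (k : Fin n → ℝ)
    (hL1 : L.mulVec (fun _ => 1) = 0)
    (hkL : Matrix.vecMul k L = 0)
    (hk1 : k ⬝ᵥ (fun _ => (1 : ℝ)) ≠ 0)
    (hsimple : ((L.map (Complex.ofReal)).charpoly).rootMultiplicity 0 = 1) :
    spectrum ℂ ((L + Matrix.vecMulVec (fun _ => 1) k).map (Complex.ofReal)) =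
      {((k ⬝ᵥ (fun _ => (1 : ℝ)) : ℝ) : ℂ)} ∪
        (spectrum ℂ (L.map (Complex.ofReal)) \ {0}) := by
  set f := Complex.ofRealHom
  set u : Fin n → ℝ := fun _ => 1
  have hu : L.map f *ᵥ (f ∘ u) = 0 := by
    ext i; rw [← RingHom.map_mulVec, hL1, Pi.zero_apply, map_zero, Pi.zero_apply]
  have hc : (f ∘ k) ᵥ* L.map f = 0 := by
    ext j; rw [← RingHom.map_vecMul, hkL, Pi.zero_apply, map_zero, Pi.zero_apply]
  have hcu : (f ∘ k) ⬝ᵥ (f ∘ u) = f (k ⬝ᵥ u) := (RingHom.map_dotProduct f _ _).symm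
  have hcu0 : (f ∘ k) ⬝ᵥ (f ∘ u) ≠ 0 := by
    rw [hcu, map_ne_zero]; exact hk1
  have hu0 : f ∘ u ≠ 0 := fun h => hcu0 (by rw [h, dotProduct_zero])
  have hmap : (L + vecMulVec u k).map f = L.map f + vecMulVec (f ∘ u) (f ∘ k) := by
    ext i j; simp [vecMulVec_apply]
  change spectrum ℂ ((L + vecMulVec u k).map f) = {f (k ⬝ᵥ u)} ∪ (spectrum ℂ (L.map f) \ {0})
  rw [hmap, ← hcu]
  exact spectrum_add_vecMulVec (ker_toLin'_eq_span_singleton hsimple.le hu hu0) hc hcu0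

theorem rank_one_shift_spectrum {n : ℕ} (L : Matrix (Fin n) (Fin n) ℝ)
    (k : Fin n → ℝ) (hk : ∀ i, 0 < k i)
    (hL1 : L.mulVec (fun _ => 1) = 0)
    (hkL : Matrix.vecMul k L = 0)
    (hk1 : k ⬝ᵥ (fun _ => (1 : ℝ)) ≠ 0)
    (hsimple : ((L.map (Complex.ofReal)).charpoly).rootMultiplicity 0 = 1) :
    spectrum ℂ ((L + Matrix.vecMulVec (fun _ => 1) k).map (Complex.ofReal)) =
      {((k ⬝ᵥ (fun _ => (1 : ℝ)) : ℝ) : ℂ)} ∪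
        (spectrum ℂ (L.map (Complex.ofReal)) \ {0}) :=
  rank_one_shift_spectrum_general L k hL1 hkL hk1 hsimple
end
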